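/- arXiv:0705.2088 — 4 statements merged into one kernel-verified Lean document; each statement's English description precedes it below -/
import Mathlib

section
/- Let a_1, …, a_n ∈ ℤ^n be linearly independent, and let C = {ρ_1 a_1 + ⋯ + ρ_n a_n : 0 ≤ ρ_i < 1} be the half-open parallelepiped spanned by them. Then the number of integer points in C equals |det(a_1, …, a_n)|. -/
/-!
Reducing coordinates modulo 1 in the basis `a` (`ZSpan.fract`) identifies `ℤⁿ / span ℤ a` with
the integer points of the half-open parallelepiped, and the index of `span ℤ a` in `ℤⁿ` is
`|det a|` (via the Smith normal form, `Submodule.natAbs_det_basis_change`).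
-/

open Module Submodule

theorem Module.Basis.natCard_quotient_span_int_eq_abs_det {K E ι : Type*} [Field K]
    [LinearOrder K] [IsStrictOrderedRing K] [AddCommGroup E] [Module K E] [Fintype ι]
    [DecidableEq ι] (b c : Basis ι K E) (h : span ℤ (Set.range b) ≤ span ℤ (Set.range c)) :
    (Nat.card (span ℤ (Set.range c) ⧸
      (span ℤ (Set.range b)).comap (span ℤ (Set.range c)).subtype) : K) = |c.det b| := by
  have := Module.Free.of_basis (c.restrictScalars ℤ)
  have := Module.Finite.of_basis (c.restrictScalars ℤ)
  rw [← Submodule.natAbs_det_basis_change (c.restrictScalars ℤ) _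
    ((b.restrictScalars ℤ).map (comapSubtypeEquivOfLe h).symm),
    Nat.cast_natAbs, Int.cast_abs, Basis.det_apply, Basis.det_apply, Int.cast_det]
  congr 3
  ext i j
  simp only [Matrix.map_apply, Basis.toMatrix_apply]
  rw [← eq_intCast (algebraMap ℤ K), Basis.restrictScalars_repr_apply]
  simp

namespace ZSpan

variable {K E ι : Type*} [NormedField K] [LinearOrder K]
  [NormedAddCommGroup E] [NormedSpace K E] [Fintype ι] (b : Basis ι K E)

theorem fundamentalDomain_eq_setOf_sum :
    fundamentalDomain b =
      {x | ∃ ρ : ι → K, (∀ i, 0 ≤ ρ i ∧ ρ i < 1) ∧ x = ∑ j, ρ j • b j} := by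
  ext x
  constructor
  · intro hx
    exact ⟨b.repr x, fun i => hx i, (b.sum_repr x).symm⟩
  · rintro ⟨ρ, hρ, rfl⟩ i
    rw [b.repr_sum_self]
    exact hρ i

variable [IsStrictOrderedRing K] [FloorRing K]

theorem ncard_fundamentalDomain_inter {M : Submodule ℤ E} (hM : span ℤ (Set.range b) ≤ M) :
    (fundamentalDomain b ∩ M).ncard =
      Nat.card (M ⧸ (span ℤ (Set.range b)).comap M.subtype) := by
  let f : M → ↥(fundamentalDomain b ∩ M) := fun x =>
    ⟨fract b x, fract_mem_fundamentalDomain b x, M.sub_mem x.2 (hM (floor b x).2)⟩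
  have hf : Function.Surjective f := fun y =>
    ⟨⟨y, y.2.2⟩, Subtype.ext (fract_eq_self.mpr y.2.1)⟩
  have hker : ∀ x y : M, quotientRel ((span ℤ (Set.range b)).comap M.subtype) x y ↔
      Setoid.ker f x y := by
    intro x y
    rw [quotientRel_def, Setoid.ker_def, Subtype.ext_iff, fract_eq_fract, neg_add_eq_sub,
      sub_mem_comm_iff]
    rfl
  rw [← Nat.card_coe_set_eq]
  exact (Nat.card_congr ((Quotient.congrRight hker).trans
    (Setoid.quotientKerEquivOfSurjective f hf))).symm

end ZSpan

theorem PiLp.mem_span_int_basisFun_iff {K ι : Type*} [Field K] [CharZero K] [Finite ι]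
    (p : ENNReal) (x : PiLp p fun _ : ι => K) :
    x ∈ span ℤ (Set.range (PiLp.basisFun p K ι)) ↔ ∀ i, ∃ z : ℤ, x i = z := by
  simp only [Basis.mem_span_iff_repr_mem, PiLp.basisFun_repr, Set.mem_range, eq_intCast, eq_comm]

/-- The number of integer points in the half-open parallelepiped spanned by
linearly independent integer vectors `a 1, …, a n` equals the absolute value of
the determinant of the matrix with these columns. -/
theorem lattice_points_in_halfopen_parallelepiped (n : ℕ) (a : Fin n → Fin n → ℤ)
    (ha : LinearIndependent ℝ (fun j => (WithLp.toLp 2 (fun i => (a j i : ℝ)) : EuclideanSpace ℝ (Fin n)))) :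
    ({x : EuclideanSpace ℝ (Fin n) |
        ∃ ρ : Fin n → ℝ, (∀ i, 0 ≤ ρ i ∧ ρ i < 1) ∧
          x = ∑ j, ρ j • (WithLp.toLp 2 (fun i => (a j i : ℝ)) : EuclideanSpace ℝ (Fin n))} ∩
      {x | ∀ i, ∃ z : ℤ, x i = (z : ℝ)}).ncard =
      ((Matrix.of fun i j => a j i).det).natAbs := by
  classical
  let v := fun j => (WithLp.toLp 2 (fun i => (a j i : ℝ)) : EuclideanSpace ℝ (Fin n))
  let b := basisOfLinearIndependentOfCardEqFinrank' v ha (by simp)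
  have hb : ⇑b = v := Basis.coe_mk _ _
  let e := PiLp.basisFun 2 ℝ (Fin n)
  have hC : ZSpan.fundamentalDomain b = {x | ∃ ρ : Fin n → ℝ,
      (∀ i, 0 ≤ ρ i ∧ ρ i < 1) ∧ x = ∑ j, ρ j • v j} := by
    rw [ZSpan.fundamentalDomain_eq_setOf_sum, hb]
  have hZ : (span ℤ (Set.range e) : Set (EuclideanSpace ℝ (Fin n))) =
      {x | ∀ i, ∃ z : ℤ, x i = (z : ℝ)} :=
    Set.ext (PiLp.mem_span_int_basisFun_iff 2)
  have hle : span ℤ (Set.range b) ≤ span ℤ (Set.range e) :=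
    span_le.2 <| Set.range_subset_iff.2 fun j =>
      (PiLp.mem_span_int_basisFun_iff 2 _).2 fun i => ⟨a j i, by simp [hb, v]⟩
  have hdet : e.det b = (Matrix.of fun i j => a j i).det := by
    rw [Basis.det_apply, Int.cast_det]
    congr
    ext i j
    simp [Basis.toMatrix_apply, hb, v, e]
  rw [← hC, ← hZ, ZSpan.ncard_fundamentalDomain_inter b hle]
  apply Nat.cast_injective (R := ℝ)
  rw [b.natCard_quotient_span_int_eq_abs_det e hle, hdet, Nat.cast_natAbs, Int.cast_abs]
end

section
/- Let a_1, …, a_n ∈ ℤ^n be linearly independent, let C = {ρ_1 a_1 + ⋯ + ρ_n a_n : 0 ≤ ρ_i < 1}, and let t ∈ ℝ^n be any vector. Then #((t + C) ∩ ℤ^n) = #(C ∩ ℤ^n). -/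
/-!
Reducing modulo the sublattice `Λ = ℤ a₁ + ⋯ + ℤ aₙ` (the map `ZSpan.fract`) sends every point to
its unique representative in the half-open parallelepiped `C`. Since `Λ ⊆ ℤⁿ`, it preserves integer
points, and it is injective on any translate `t + C`, whose points are pairwise incongruent
modulo `Λ`. Every `x ∈ C ∩ ℤⁿ` is hit, by the representative of its class in `t + C`, which is
again an integer point. Hence `fract` is a bijection from `(t + C) ∩ ℤⁿ` onto `C ∩ ℤⁿ`.
-/

open Module Submodule Set
open scoped Pointwise

namespace ZSpan

variable {E ι K : Type*} [NormedField K] [LinearOrder K] [NormedAddCommGroup E] [NormedSpace K E]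
  [Fintype ι] (b : Basis ι K E)

theorem mem_fundamentalDomain_iff_exists_sum {x : E} :
    x ∈ fundamentalDomain b ↔ ∃ ρ : ι → K, (∀ i, 0 ≤ ρ i ∧ ρ i < 1) ∧ x = ∑ i, ρ i • b i := by
  refine ⟨fun hx => ⟨b.repr x, fun i => mem_Ico.1 (hx i), (b.sum_repr x).symm⟩, ?_⟩
  rintro ⟨ρ, hρ, rfl⟩ i
  rw [b.repr_sum_self]
  exact mem_Ico.2 (hρ i)

variable [IsStrictOrderedRing K] [FloorRing K]

theorem injOn_fract_vadd_fundamentalDomain (t : E) :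
    InjOn (fract b) (t +ᵥ fundamentalDomain b) := by
  rintro _ ⟨x, hx, rfl⟩ _ ⟨y, hy, rfl⟩ h
  have hxy : fract b x = fract b y := by
    rw [fract_eq_fract] at h ⊢
    simpa only [vadd_eq_add, neg_add_rev, add_assoc, neg_add_cancel_left] using h
  rw [fract_eq_self.2 hx, fract_eq_self.2 hy] at hxy
  rw [hxy]

variable {b}

theorem fract_mem_of_span_le {L : Submodule ℤ E} (hL : span ℤ (range b) ≤ L) {x : E}
    (hx : x ∈ L) : fract b x ∈ L :=
  L.sub_mem hx (hL (floor b x).2)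

theorem image_fract_vadd_fundamentalDomain_inter {L : Submodule ℤ E}
    (hL : span ℤ (range b) ≤ L) (t : E) :
    fract b '' ((t +ᵥ fundamentalDomain b) ∩ L) = fundamentalDomain b ∩ L := by
  apply Subset.antisymm
  · rintro _ ⟨y, ⟨-, hyL⟩, rfl⟩
    exact ⟨fract_mem_fundamentalDomain b y, fract_mem_of_span_le hL hyL⟩
  · rintro x ⟨hxF, hxL⟩
    have hfloor : (floor b (x - t) : E) ∈ span ℤ (range b) := (floor b (x - t)).2
    refine ⟨x - floor b (x - t), ⟨⟨fract b (x - t), fract_mem_fundamentalDomain b _, ?_⟩,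
      L.sub_mem hxL (hL hfloor)⟩, ?_⟩
    · change t + fract b (x - t) = _
      rw [fract_apply]
      abel
    · rw [sub_eq_add_neg, fract_add_ZSpan b x (neg_mem hfloor), fract_eq_self.2 hxF]

theorem ncard_vadd_fundamentalDomain_inter {L : Submodule ℤ E}
    (hL : span ℤ (range b) ≤ L) (t : E) :
    ((t +ᵥ fundamentalDomain b) ∩ L).ncard = (fundamentalDomain b ∩ L).ncard := by
  rw [← image_fract_vadd_fundamentalDomain_inter hL t,
    ((injOn_fract_vadd_fundamentalDomain b t).mono inter_subset_left).ncard_image]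

end ZSpan

theorem EuclideanSpace.mem_span_int_basisFun_iff {ι : Type*} [Fintype ι]
    {x : EuclideanSpace ℝ ι} :
    x ∈ span ℤ (range (EuclideanSpace.basisFun ι ℝ).toBasis) ↔ ∀ i, ∃ z : ℤ, x i = z := by
  simp only [Basis.mem_span_iff_repr_mem, OrthonormalBasis.coe_toBasis_repr_apply,
    EuclideanSpace.basisFun_repr, mem_range, eq_intCast, eq_comm]

/-- The number of integer points in any translate `t + C` of the half-open
parallelepiped `C` spanned by linearly independent integer vectors equals the
number of integer points in `C` itself. -/
theorem lattice_points_translated_parallelepiped (n : ℕ) (a : Fin n → Fin n → ℤ)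
    (ha : LinearIndependent ℝ (fun j => (WithLp.toLp 2 (fun i => (a j i : ℝ)) : EuclideanSpace ℝ (Fin n))))
    (t : EuclideanSpace ℝ (Fin n)) :
    (((fun x => t + x) '' {x : EuclideanSpace ℝ (Fin n) |
        ∃ ρ : Fin n → ℝ, (∀ i, 0 ≤ ρ i ∧ ρ i < 1) ∧
          x = ∑ j, ρ j • (WithLp.toLp 2 (fun i => (a j i : ℝ)) : EuclideanSpace ℝ (Fin n))}) ∩
      {x | ∀ i, ∃ z : ℤ, x i = (z : ℝ)}).ncard =
    ({x : EuclideanSpace ℝ (Fin n) |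
        ∃ ρ : Fin n → ℝ, (∀ i, 0 ≤ ρ i ∧ ρ i < 1) ∧
          x = ∑ j, ρ j • (WithLp.toLp 2 (fun i => (a j i : ℝ)) : EuclideanSpace ℝ (Fin n))} ∩
      {x | ∀ i, ∃ z : ℤ, x i = (z : ℝ)}).ncard := by
  set b := basisOfLinearIndependentOfCardEqFinrank' _ ha (by simp)
  have hC : {x : EuclideanSpace ℝ (Fin n) | ∃ ρ : Fin n → ℝ, (∀ i, 0 ≤ ρ i ∧ ρ i < 1) ∧
      x = ∑ j, ρ j • (WithLp.toLp 2 (fun i => (a j i : ℝ)) : EuclideanSpace ℝ (Fin n))} =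
      ZSpan.fundamentalDomain b := by
    ext x
    rw [ZSpan.mem_fundamentalDomain_iff_exists_sum, coe_basisOfLinearIndependentOfCardEqFinrank']
    rfl
  have hZ : {x : EuclideanSpace ℝ (Fin n) | ∀ i, ∃ z : ℤ, x i = (z : ℝ)} =
      span ℤ (range (EuclideanSpace.basisFun (Fin n) ℝ).toBasis) := by
    ext x
    exact EuclideanSpace.mem_span_int_basisFun_iff.symm
  have hL : span ℤ (range b) ≤ span ℤ (range (EuclideanSpace.basisFun (Fin n) ℝ).toBasis) :=
    span_le.2 <| range_subset_iff.2 fun j =>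
      EuclideanSpace.mem_span_int_basisFun_iff.2 fun i => ⟨a j i, by simp [b]⟩
  rw [hC, hZ]
  exact ZSpan.ncard_vadd_fundamentalDomain_inter hL t
end

section
/- For n > 2 and m ∈ ℕ, m ≥ 1, with v = e_1 + ⋯ + e_n and T_m = conv{0, e_1, …, e_{n−1}, m·v}, the translate (1/2)v + T_m contains at least the m integer points v, 2v, …, m·v. -/
/-!
The points `j • v` with `1 ≤ j ≤ m` all lie on the diagonal: `j • v = (1/2) • v + (j - 1/2) • v`,
and `(j - 1/2) • v` lies on the edge `[0, m • v]` of `T_m` because `0 ≤ j - 1/2 ≤ m`.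
-/

theorem smul_mem_segment_zero_smul {𝕜 E : Type*} [Field 𝕜] [LinearOrder 𝕜] [IsStrictOrderedRing 𝕜]
    [AddCommGroup E] [Module 𝕜 E] {a b : 𝕜} (ha : 0 ≤ a) (hab : a ≤ b) (x : E) :
    a • x ∈ segment 𝕜 0 (b • x) := by
  have h := Set.mem_image_of_mem (LinearMap.toSpanSingleton 𝕜 E x).toAffineMap
    (Icc_subset_segment (𝕜 := 𝕜) ⟨ha, hab⟩)
  rwa [image_segment, LinearMap.coe_toAffineMap, map_zero] at h

theorem translated_reeve_simplex_contains_points_general (n : ℕ) (m : ℕ)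
    (j : ℕ) (hj1 : 1 ≤ j) (hjm : j ≤ m) :
    (j : ℝ) • (WithLp.toLp 2 (fun _ => (1 : ℝ)) : EuclideanSpace ℝ (Fin n)) ∈
      (fun x => (1 / 2 : ℝ) • (WithLp.toLp 2 (fun _ => (1 : ℝ)) : EuclideanSpace ℝ (Fin n)) + x) ''
        convexHull ℝ
          ({0, (m : ℝ) • (WithLp.toLp 2 (fun _ => (1 : ℝ)) : EuclideanSpace ℝ (Fin n))} ∪
            {x : EuclideanSpace ℝ (Fin n) |
              ∃ i : Fin n, (i : ℕ) < n - 1 ∧ x = EuclideanSpace.single i (1 : ℝ)}) := by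
  set v : EuclideanSpace ℝ (Fin n) := WithLp.toLp 2 (fun _ => (1 : ℝ))
  have hj1' : (1 : ℝ) ≤ j := by exact_mod_cast hj1
  have hjm' : (j : ℝ) ≤ m := by exact_mod_cast hjm
  have h_edge : ((j : ℝ) - 1 / 2) • v ∈ segment ℝ 0 ((m : ℝ) • v) :=
    smul_mem_segment_zero_smul (by linarith) (by linarith) v
  refine ⟨((j : ℝ) - 1 / 2) • v, ?_, ?_⟩
  · exact segment_subset_convexHull (by simp) (by simp) h_edge
  · simp only [← add_smul]
    norm_num

/-- The translate `(1/2)v + T_m` of the Reeve simplex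
`T_m = conv{0, e₁, …, e_{n−1}, m·v}` (with `v = e₁ + ⋯ + e_n`, `n > 2`)
contains the `m` integer points `v, 2v, …, m·v`. -/
theorem translated_reeve_simplex_contains_points (n : ℕ) (hn : 2 < n) (m : ℕ) (hm : 1 ≤ m)
    (j : ℕ) (hj1 : 1 ≤ j) (hjm : j ≤ m) :
    (j : ℝ) • (WithLp.toLp 2 (fun _ => (1 : ℝ)) : EuclideanSpace ℝ (Fin n)) ∈
      (fun x => (1 / 2 : ℝ) • (WithLp.toLp 2 (fun _ => (1 : ℝ)) : EuclideanSpace ℝ (Fin n)) + x) ''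
        convexHull ℝ
          ({0, (m : ℝ) • (WithLp.toLp 2 (fun _ => (1 : ℝ)) : EuclideanSpace ℝ (Fin n))} ∪
            {x : EuclideanSpace ℝ (Fin n) |
              ∃ i : Fin n, (i : ℕ) < n - 1 ∧ x = EuclideanSpace.single i (1 : ℝ)}) :=
  translated_reeve_simplex_contains_points_general n m j hj1 hjm
end

section
/- Let Λ ⊂ ℝ^n be a full-rank lattice with polar lattice Λ*, let λ_1(Λ*) be the length of a shortest nonzero vector of Λ*, and let det Λ_{n−1} be the minimal determinant of an (n−1)-dimensional sublattice of Λ. Then det(Λ) · λ_1(Λ*) = det(Λ_{n−1}). -/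
open RealInnerProductSpace Matrix

/-!
For linearly independent `c₁, …, c_{n-1}` the generalized cross product `w` (the vector with
`⟪w, x⟫ = det (x, c₁, …, c_{n-1})`) is orthogonal to every `cᵢ` and satisfies
`‖w‖² = det (gram c)`. If the `cᵢ` lie in `Λ`, then `det (x, c)` is an integer multiple of
`det Λ` for every `x ∈ Λ`, so `w / det Λ ∈ Λ*`; hence `det Λ · λ₁(Λ*) ≤ det Λ_{n-1}`.

Conversely, for `0 ≠ y ∈ Λ*` the functional `x ↦ ⟪y, x⟫` is integer valued on `Λ ≅ ℤⁿ`, and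
its kernel is saturated, so `Λ` has a basis `v₀, v₁, …, v_{n-1}` with `v₁, …, v_{n-1} ⊥ y`.
The cross product `w` of `v₁, …, v_{n-1}` is a multiple `t • y`, and
`t · ⟪y, v₀⟫ = ⟪w, v₀⟫ = ± det Λ` with `⟪y, v₀⟫` a nonzero integer, so `‖w‖ ≤ det Λ · ‖y‖`.
-/

theorem Module.exists_basis_fin_succ_map_succ_eq_zero {R M : Type*} [CommRing R] [IsDomain R]
    [IsPrincipalIdealRing R] [AddCommGroup M] [Module R M] [Module.Free R M] [Module.Finite R M]
    {k : ℕ} (hk : Module.finrank R M = k + 1) (f : M →ₗ[R] R) :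
    ∃ u : Module.Basis (Fin (k + 1)) R M, ∀ i : Fin k, f (u i.succ) = 0 := by
  by_cases hf : f = 0
  · exact ⟨Module.finBasisOfFinrankEq R M hk, fun i => by simp [hf]⟩
  obtain ⟨g, hg⟩ := Submodule.IsPrincipal.principal (LinearMap.range f)
  obtain ⟨x₀, hx₀⟩ : g ∈ LinearMap.range f := hg ▸ Submodule.mem_span_singleton_self g
  have hg0 : g ≠ 0 := by
    rintro rfl
    exact hf (LinearMap.range_eq_bot.mp (by simpa using hg))
  obtain ⟨k', bN⟩ := Submodule.basisOfPid (Module.finBasis R M) (LinearMap.ker f)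
  have hli : ∀ c : R, ∀ x ∈ LinearMap.ker f, c • x₀ + x = 0 → c = 0 := by
    intro c x hx h
    have := congrArg f h
    rw [map_add, map_smul, hx₀, LinearMap.mem_ker.mp hx, smul_eq_mul, add_zero, map_zero] at this
    exact (mul_eq_zero.mp this).resolve_right hg0
  have hsp : ∀ z : M, ∃ c : R, z + c • x₀ ∈ LinearMap.ker f := by
    intro z
    obtain ⟨d, hd⟩ := Submodule.mem_span_singleton.mp (hg ▸ LinearMap.mem_range_self f z)
    refine ⟨-d, LinearMap.mem_ker.mpr ?_⟩
    rw [map_add, map_smul, hx₀, ← hd, smul_eq_mul, smul_eq_mul, neg_mul, add_neg_cancel]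
  -- `f x₀` generates `range f`, so `M = R ∙ x₀ ⊕ ker f`.
  let u := Module.Basis.mkFinCons x₀ bN hli hsp
  obtain rfl : k' = k := by simpa [hk] using (Module.finrank_eq_card_basis u).symm
  exact ⟨u, fun i => by simp [u, Module.Basis.coe_mkFinCons]⟩

theorem Submodule.mem_span_int_range_iff {E ι : Type*} [AddCommGroup E] [Module ℝ E] [Fintype ι]
    (v : ι → E) {x : E} :
    x ∈ Submodule.span ℤ (Set.range v) ↔ ∃ z : ι → ℤ, ∑ i, (z i : ℝ) • v i = x := by
  simp only [Submodule.mem_span_range_iff_exists_fun, Int.cast_smul_eq_zsmul]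

section InnerProductSpace

variable {E : Type*} [NormedAddCommGroup E] [InnerProductSpace ℝ E]

theorem Submodule.mem_orthogonal_span_range_iff {ι : Type*} (c : ι → E) (x : E) :
    x ∈ (Submodule.span ℝ (Set.range c))ᗮ ↔ ∀ i, ⟪c i, x⟫ = 0 := by
  rw [← Submodule.span_singleton_le_iff_mem, ← Submodule.isOrtho_iff_le, Submodule.isOrtho_comm,
    Submodule.isOrtho_span]
  simp

theorem exists_ne_zero_forall_inner_eq_zero [FiniteDimensional ℝ E] {m : ℕ}
    (hm : m < Module.finrank ℝ E) (c : Fin m → E) : ∃ x ≠ 0, ∀ i, ⟪c i, x⟫ = 0 := by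
  have hK : Submodule.span ℝ (Set.range c) ≠ ⊤ := by
    intro h
    have := finrank_range_le_card (R := ℝ) c
    rw [Set.finrank, h, finrank_top, Fintype.card_fin] at this
    omega
  obtain ⟨x, hx, hx0⟩ := Submodule.exists_mem_ne_zero_of_ne_bot
    (mt Submodule.orthogonal_eq_bot_iff.mp hK)
  exact ⟨x, hx0, (Submodule.mem_orthogonal_span_range_iff c x).mp hx⟩

theorem Matrix.det_gram_cons {m : ℕ} (c : Fin m → E) (x : E) (hx : ∀ i, ⟪c i, x⟫ = 0) :
    (gram ℝ (Fin.cons x c : Fin (m + 1) → E)).det = ‖x‖ ^ 2 * (gram ℝ c).det := by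
  have hx' : ∀ i, ⟪x, c i⟫ = 0 := fun i => by rw [real_inner_comm]; exact hx i
  rw [det_succ_row_zero, Fin.sum_univ_succ]
  simp [gram, hx', submatrix]

def polarLattice (Λ : Set E) : Set E :=
  {y | ∀ x ∈ Λ, ∃ z : ℤ, ⟪y, x⟫ = z}

end InnerProductSpace

noncomputable section

namespace EuclideanSpace

variable {ι κ : Type*}

def rowMatrix (v : ι → EuclideanSpace ℝ κ) : Matrix ι κ ℝ :=
  Matrix.of fun i j => v i j

theorem rowMatrix_sum_smul [Fintype κ] {ι' : Type*} [Fintype ι'] (A : Matrix ι ι' ℝ)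
    (v : ι' → EuclideanSpace ℝ κ) :
    rowMatrix (fun i => ∑ j, A i j • v j) = A * rowMatrix v := by
  ext i j
  simp [rowMatrix, Matrix.mul_apply]

theorem gram_eq_rowMatrix_mul_transpose [Fintype κ] (v : ι → EuclideanSpace ℝ κ) :
    Matrix.gram ℝ v = rowMatrix v * (rowMatrix v)ᵀ := by
  ext i j
  simp [Matrix.gram, rowMatrix, Matrix.mul_apply, PiLp.inner_apply, mul_comm]

theorem det_gram_eq_sq [Fintype ι] [DecidableEq ι] (v : ι → EuclideanSpace ℝ ι) :
    (Matrix.gram ℝ v).det = (rowMatrix v).det ^ 2 := by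
  rw [gram_eq_rowMatrix_mul_transpose, Matrix.det_mul, Matrix.det_transpose, sq]

theorem linearIndependent_iff_det_rowMatrix_ne_zero [Fintype ι] [DecidableEq ι]
    (v : ι → EuclideanSpace ℝ ι) : LinearIndependent ℝ v ↔ (rowMatrix v).det ≠ 0 := by
  rw [← isUnit_iff_ne_zero, ← Matrix.isUnit_iff_isUnit_det,
    ← Matrix.linearIndependent_rows_iff_isUnit,
    ← LinearMap.linearIndependent_iff _ (WithLp.linearEquiv 2 ℝ (ι → ℝ)).ker]
  rfl

variable {m : ℕ} (c : Fin m → EuclideanSpace ℝ (Fin (m + 1)))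

def crossDual : EuclideanSpace ℝ (Fin (m + 1)) →ₗ[ℝ] ℝ :=
  (detRowAlternating.toMultilinearMap.toLinearMap (Fin.cons 0 fun i => c i) 0).comp
    (WithLp.linearEquiv 2 ℝ (Fin (m + 1) → ℝ)).toLinearMap

def cross : EuclideanSpace ℝ (Fin (m + 1)) :=
  (InnerProductSpace.toDual ℝ _).symm (crossDual c).toContinuousLinearMap

theorem inner_cross (x : EuclideanSpace ℝ (Fin (m + 1))) :
    ⟪cross c, x⟫ = (rowMatrix (Fin.cons x c)).det := by
  rw [cross, InnerProductSpace.toDual_symm_apply]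
  simp only [crossDual, LinearMap.coe_toContinuousLinearMap', LinearMap.coe_comp,
    LinearEquiv.coe_coe, Function.comp_apply, MultilinearMap.toLinearMap_apply,
    Fin.update_cons_zero]
  show det _ = det _
  congr 1
  ext i j
  cases i using Fin.cases <;> rfl

theorem inner_cross_eq_zero (i : Fin m) : ⟪c i, cross c⟫ = 0 := by
  rw [real_inner_comm, inner_cross]
  exact det_zero_of_row_eq (Fin.succ_ne_zero i).symm (by ext; simp [rowMatrix])

theorem inner_cross_sq (x : EuclideanSpace ℝ (Fin (m + 1))) (hx : ∀ i, ⟪c i, x⟫ = 0) :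
    ⟪cross c, x⟫ ^ 2 = ‖x‖ ^ 2 * (gram ℝ c).det := by
  rw [inner_cross, ← det_gram_eq_sq, det_gram_cons c x hx]

theorem norm_cross_sq : ‖cross c‖ ^ 2 = (gram ℝ c).det := by
  by_cases hw : cross c = 0
  · obtain ⟨x, hx0, hx⟩ := exists_ne_zero_forall_inner_eq_zero (by simp) c
    have hx2 : ‖x‖ ^ 2 ≠ 0 := by positivity
    have h0 : ‖x‖ ^ 2 * (gram ℝ c).det = 0 := by
      rw [← inner_cross_sq c x hx, hw, inner_zero_left, sq, mul_zero]
    rw [hw, norm_zero, zero_pow two_ne_zero, eq_comm]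
    exact (mul_eq_zero.mp h0).resolve_left hx2
  · have := inner_cross_sq c (cross c) (inner_cross_eq_zero c)
    rw [real_inner_self_eq_norm_sq] at this
    have hw2 : ‖cross c‖ ^ 2 ≠ 0 := by positivity
    exact mul_left_cancel₀ hw2 (by rw [← this]; ring)

theorem norm_cross_eq_sqrt : ‖cross c‖ = √(gram ℝ c).det := by
  rw [← norm_cross_sq, Real.sqrt_sq (norm_nonneg _)]

theorem cross_ne_zero (hc : LinearIndependent ℝ c) : cross c ≠ 0 := by
  have := (posDef_gram_iff_linearIndependent.mpr hc).det_pos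
  rw [← norm_cross_sq] at this
  intro h
  simp [h] at this

theorem exists_cross_eq_smul (hc : LinearIndependent ℝ c) {y : EuclideanSpace ℝ (Fin (m + 1))}
    (hy : ∀ i, ⟪c i, y⟫ = 0) (hy0 : y ≠ 0) : ∃ t : ℝ, cross c = t • y := by
  set K := Submodule.span ℝ (Set.range c)
  have hK : Module.finrank ℝ Kᗮ = 1 := by
    have := K.finrank_add_finrank_orthogonal
    rw [finrank_span_eq_card hc, finrank_euclideanSpace_fin, Fintype.card_fin] at this
    omega
  have hyK : y ∈ Kᗮ := (Submodule.mem_orthogonal_span_range_iff c y).mpr hy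
  have hwK : cross c ∈ Kᗮ :=
    (Submodule.mem_orthogonal_span_range_iff c _).mpr (inner_cross_eq_zero c)
  obtain ⟨t, ht⟩ := (finrank_eq_one_iff_of_nonzero' (⟨y, hyK⟩ : Kᗮ) (by simpa using hy0)).mp hK
    ⟨cross c, hwK⟩
  exact ⟨t, by simpa using ht.symm⟩

theorem exists_det_rowMatrix_eq_int_mul [Fintype ι] [DecidableEq ι] (b v : ι → EuclideanSpace ℝ ι)
    (hv : ∀ i, v i ∈ Submodule.span ℤ (Set.range b)) :
    ∃ z : ℤ, (rowMatrix v).det = z * (rowMatrix b).det := by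
  choose Z hZ using fun i => (Submodule.mem_span_int_range_iff b).mp (hv i)
  refine ⟨(Matrix.of Z).det, ?_⟩
  have hv : v = fun i => ∑ j, (Matrix.of Z).map (Int.cast : ℤ → ℝ) i j • b j :=
    funext fun i => (hZ i).symm
  rw [hv, rowMatrix_sum_smul, det_mul, Int.cast_det]

theorem smul_cross_mem_polarLattice (b : Fin (m + 1) → EuclideanSpace ℝ (Fin (m + 1)))
    (hc : ∀ i, c i ∈ Submodule.span ℤ (Set.range b)) :
    (rowMatrix b).det⁻¹ • cross c ∈ polarLattice (Submodule.span ℤ (Set.range b) : Set _) := by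
  intro x hx
  obtain ⟨z, hz⟩ := exists_det_rowMatrix_eq_int_mul b (Fin.cons x c)
    (fun i => Fin.cases (by simpa using hx) (by simpa using hc) i)
  by_cases hb : (rowMatrix b).det = 0
  · exact ⟨0, by simp [hb]⟩
  · refine ⟨z, ?_⟩
    rw [real_inner_smul_left, inner_cross, hz]
    field_simp

theorem exists_mem_polarLattice_abs_det_mul_norm_eq_norm_cross
    (b : Module.Basis (Fin (m + 1)) ℝ (EuclideanSpace ℝ (Fin (m + 1))))
    (hc : ∀ i, c i ∈ Submodule.span ℤ (Set.range b)) (hci : LinearIndependent ℝ c) :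
    ∃ y ∈ polarLattice (Submodule.span ℤ (Set.range ⇑b) : Set (EuclideanSpace ℝ (Fin (m + 1)))),
      y ≠ 0 ∧ |(rowMatrix b).det| * ‖y‖ = ‖cross c‖ := by
  have hb : (rowMatrix b).det ≠ 0 :=
    (linearIndependent_iff_det_rowMatrix_ne_zero b).mp b.linearIndependent
  refine ⟨_, smul_cross_mem_polarLattice c b hc,
    smul_ne_zero (inv_ne_zero hb) (cross_ne_zero c hci), ?_⟩
  rw [norm_smul, norm_inv, Real.norm_eq_abs, mul_inv_cancel_left₀ (abs_ne_zero.mpr hb)]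

theorem exists_unimodular_rows_orthogonal (b : Fin (m + 1) → EuclideanSpace ℝ (Fin (m + 1)))
    {y : EuclideanSpace ℝ (Fin (m + 1))}
    (hy : y ∈ polarLattice (Submodule.span ℤ (Set.range b) : Set _)) :
    ∃ v : Fin (m + 1) → EuclideanSpace ℝ (Fin (m + 1)),
      (∀ i, v i ∈ Submodule.span ℤ (Set.range b)) ∧
      |(rowMatrix v).det| = |(rowMatrix b).det| ∧ ∀ i : Fin m, ⟪v i.succ, y⟫ = 0 := by
  choose a ha using fun j => hy (b j) (Submodule.subset_span (Set.mem_range_self j))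
  obtain ⟨u, hu⟩ := Module.exists_basis_fin_succ_map_succ_eq_zero (Module.finrank_fin_fun ℤ)
    (Fintype.linearCombination ℤ a)
  let U : Matrix (Fin (m + 1)) (Fin (m + 1)) ℤ := Matrix.of fun i j => u i j
  refine ⟨fun i => ∑ j, U.map (Int.cast : ℤ → ℝ) i j • b j,
    fun i => (Submodule.mem_span_int_range_iff b).mpr ⟨_, rfl⟩, ?_, fun i => ?_⟩
  · have hU : IsUnit U.det := by
      have : U = ((Pi.basisFun ℤ _).toMatrix u)ᵀ := by
        ext; simp [U, Module.Basis.toMatrix_apply]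
      rw [this, det_transpose, ← Module.Basis.det_apply]
      exact Module.Basis.isUnit_det _ _
    have hU1 : |(U.det : ℝ)| = 1 := by
      rcases Int.isUnit_iff.mp hU with h | h <;> simp [h]
    rw [rowMatrix_sum_smul, det_mul, ← Int.cast_det, abs_mul, hU1, one_mul]
  · have ha' : ∀ j, ⟪b j, y⟫ = a j := fun j => by rw [real_inner_comm]; exact ha j
    have := congrArg (Int.cast : ℤ → ℝ) (hu i)
    simpa [sum_inner, real_inner_smul_left, ha', U, Fintype.linearCombination_apply] using this

theorem exists_norm_cross_le (b : Module.Basis (Fin (m + 1)) ℝ (EuclideanSpace ℝ (Fin (m + 1))))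
    {y : EuclideanSpace ℝ (Fin (m + 1))}
    (hy : y ∈ polarLattice (Submodule.span ℤ (Set.range b) : Set _)) (hy0 : y ≠ 0) :
    ∃ c : Fin m → EuclideanSpace ℝ (Fin (m + 1)), (∀ i, c i ∈ Submodule.span ℤ (Set.range b)) ∧
      LinearIndependent ℝ c ∧ ‖cross c‖ ≤ |(rowMatrix b).det| * ‖y‖ := by
  obtain ⟨v, hvΛ, hvdet, hvy⟩ := exists_unimodular_rows_orthogonal b hy
  have hb : (rowMatrix b).det ≠ 0 :=
    (linearIndependent_iff_det_rowMatrix_ne_zero b).mp b.linearIndependent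
  have hv : LinearIndependent ℝ v := by
    rw [linearIndependent_iff_det_rowMatrix_ne_zero, ← abs_ne_zero, hvdet, abs_ne_zero]
    exact hb
  have hc : LinearIndependent ℝ (Fin.tail v) := hv.comp _ (Fin.succ_injective _)
  obtain ⟨t, ht⟩ := exists_cross_eq_smul (Fin.tail v) hc hvy hy0
  obtain ⟨d, hd⟩ := hy (v 0) (hvΛ 0)
  have htd : |t| * |(d : ℝ)| = |(rowMatrix b).det| := by
    have := inner_cross (Fin.tail v) (v 0)
    rw [Fin.cons_self_tail, ht, real_inner_smul_left, hd] at this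
    rw [← hvdet, ← this, abs_mul]
  have hd1 : (1 : ℝ) ≤ |(d : ℝ)| := by
    have hd0 : d ≠ 0 := by
      rintro rfl
      simp only [Int.cast_zero, abs_zero, mul_zero] at htd
      exact hb (abs_eq_zero.mp htd.symm)
    exact_mod_cast Int.one_le_abs hd0
  refine ⟨Fin.tail v, fun i => hvΛ _, hc, ?_⟩
  rw [ht, norm_smul, Real.norm_eq_abs, ← htd]
  gcongr
  exact le_mul_of_one_le_right (abs_nonneg t) hd1

end EuclideanSpace

end

open EuclideanSpace in
/-- For a full-rank lattice `Λ ⊆ ℝⁿ` with polar lattice `Λ*`, the determinant of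
`Λ` times the length `λ₁(Λ*)` of a shortest nonzero vector of `Λ*` equals the
minimal determinant of an `(n−1)`-dimensional sublattice of `Λ`. -/
theorem det_times_lambda1_polar_eq_min_sublattice_det (n : ℕ) (hn : 1 ≤ n)
    (b : Module.Basis (Fin n) ℝ (EuclideanSpace ℝ (Fin n)))
    (Λ : Set (EuclideanSpace ℝ (Fin n)))
    (hΛ : Λ = (Submodule.span ℤ (Set.range ⇑b) : Set (EuclideanSpace ℝ (Fin n))))
    (detΛ : ℝ) (hdet : detΛ = |(Matrix.of fun i j => b i j).det|)
    (polarΛ : Set (EuclideanSpace ℝ (Fin n)))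
    (hpolar : polarΛ = {y | ∀ x ∈ Λ, ∃ z : ℤ, ⟪y, x⟫ = (z : ℝ)})
    (lambda1 : ℝ) (hlambda1 : lambda1 = sInf {r | ∃ y ∈ polarΛ, y ≠ 0 ∧ ‖y‖ = r})
    (detSub : ℝ) (hdetSub : detSub = sInf {d | ∃ c : Fin (n - 1) → EuclideanSpace ℝ (Fin n),
      (∀ j, c j ∈ Λ) ∧ LinearIndependent ℝ c ∧
        d = Real.sqrt ((Matrix.of fun i j => ⟪c i, c j⟫).det)}) :
    detΛ * lambda1 = detSub := by
  obtain ⟨m, rfl⟩ : ∃ m, n = m + 1 := ⟨n - 1, by omega⟩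
  subst hΛ hdet hpolar hlambda1 hdetSub
  set S₁ := {r | ∃ y ∈ polarLattice (Submodule.span ℤ (Set.range ⇑b) :
    Set (EuclideanSpace ℝ (Fin (m + 1)))), y ≠ 0 ∧ ‖y‖ = r}
  set S₂ := {d | ∃ c : Fin m → EuclideanSpace ℝ (Fin (m + 1)),
    (∀ j, c j ∈ Submodule.span ℤ (Set.range b)) ∧ LinearIndependent ℝ c ∧ d = √(gram ℝ c).det}
  change |(rowMatrix b).det| * sInf S₁ = sInf S₂
  have hb : 0 < |(rowMatrix b).det| :=
    abs_pos.mpr ((linearIndependent_iff_det_rowMatrix_ne_zero b).mp b.linearIndependent)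
  have htail : LinearIndependent ℝ (Fin.tail b) := b.linearIndependent.comp _ (Fin.succ_injective _)
  have hS₁ : S₁.Nonempty := by
    obtain ⟨y, hy, hy0, -⟩ := exists_mem_polarLattice_abs_det_mul_norm_eq_norm_cross _ b
      (fun _ => Submodule.subset_span ⟨_, rfl⟩) htail
    exact ⟨_, y, hy, hy0, rfl⟩
  have hS₂ : S₂.Nonempty := ⟨_, _, fun _ => Submodule.subset_span ⟨_, rfl⟩, htail, rfl⟩
  have hS₁bdd : BddBelow S₁ := ⟨0, by rintro _ ⟨y, -, -, rfl⟩; exact norm_nonneg y⟩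
  have hS₂bdd : BddBelow S₂ := ⟨0, by rintro _ ⟨c, -, -, rfl⟩; positivity⟩
  apply le_antisymm
  · refine le_csInf hS₂ ?_
    rintro _ ⟨c, hc, hci, rfl⟩
    obtain ⟨y, hy, hy0, hyc⟩ := exists_mem_polarLattice_abs_det_mul_norm_eq_norm_cross c b hc hci
    calc |(rowMatrix b).det| * sInf S₁ ≤ |(rowMatrix b).det| * ‖y‖ := by
          gcongr
          exact csInf_le hS₁bdd ⟨y, hy, hy0, rfl⟩
      _ = √(gram ℝ c).det := by rw [hyc, norm_cross_eq_sqrt]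
  · rw [← div_le_iff₀' hb]
    refine le_csInf hS₁ ?_
    rintro _ ⟨y, hy, hy0, rfl⟩
    obtain ⟨c, hc, hci, hle⟩ := exists_norm_cross_le b hy hy0
    rw [div_le_iff₀' hb]
    exact (csInf_le hS₂bdd ⟨c, hc, hci, norm_cross_eq_sqrt c⟩).trans hle
end
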